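/- In a ranked bipartite graph between agents and institutions where the rank of each edge is determined by its institution (all edges of one institution share one rank, distinct institutions have distinct ranks), every rank-maximal matching is a maximum-cardinality matching. -/
import Mathlib


open scoped Classical

set_option linter.unusedSectionVars false

variable {N D : Type*} [Fintype N] [Fintype D] [DecidableEq N] [DecidableEq D]

/-- Neighborhood of a set of institutions: agents adjacent to some institution in `T`. -/
noncomputable def nbr (adj : D → N → Prop) (T : Finset D) : Finset N :=
  Finset.univ.filter fun a => ∃ d ∈ T, adj d a

/-- `T` is equal-acceptable: exactly as many neighbors as institutions. -/
def equalAcc (adj : D → N → Prop) (T : Finset D) : Prop :=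
  (nbr adj T).card = T.card

/-- A safe block: a nonempty equal-acceptable set with no nonempty proper
equal-acceptable subset. -/
def safeBlock (adj : D → N → Prop) (S : Finset D) : Prop :=
  S.Nonempty ∧ equalAcc adj S ∧ ∀ S' ⊂ S, S'.Nonempty → ¬ equalAcc adj S'

/-- `M` is a matching of the bipartite graph restricted to institutions `Dbar`. -/
def isMatching (adj : D → N → Prop) (Dbar : Finset D) (M : Finset (D × N)) : Prop :=
  (∀ p ∈ M, p.1 ∈ Dbar ∧ adj p.1 p.2) ∧
  (∀ p ∈ M, ∀ q ∈ M, p.1 = q.1 → p = q) ∧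
  (∀ p ∈ M, ∀ q ∈ M, p.2 = q.2 → p = q)

/-- Number of edges of rank `r` in matching `M`, where an edge's rank is the rank of
its institution under `rk`. -/
noncomputable def sigCount (rk : D → ℕ) (M : Finset (D × N)) (r : ℕ) : ℕ :=
  (M.filter fun p => rk p.1 = r).card

/-- The signature of `M'` is lexicographically strictly better than that of `M`. -/
def sigBetter (rk : D → ℕ) (M' M : Finset (D × N)) : Prop :=
  ∃ r, (∀ s < r, sigCount rk M' s = sigCount rk M s) ∧ sigCount rk M r < sigCount rk M' r

/-- `M` is a rank-maximal matching: no matching has a lexicographically better signature. -/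
def rankMaximal (adj : D → N → Prop) (rk : D → ℕ) (M : Finset (D × N)) : Prop :=
  isMatching adj Finset.univ M ∧
    ∀ M' : Finset (D × N), isMatching adj Finset.univ M' → ¬ sigBetter rk M' M

/-- A set of institutions is matchable: some matching saturates it. -/
def matchable (adj : D → N → Prop) (S : Finset D) : Prop :=
  ∃ M : Finset (D × N), isMatching adj Finset.univ M ∧ ∀ d ∈ S, ∃ a, (d, a) ∈ M

/-- `S` is lexicographically strictly better than `T` with respect to ranking `rk`. -/
def setLexBetter (rk : D → ℕ) (S T : Finset D) : Prop :=
  ∃ d, d ∈ S ∧ d ∉ T ∧ ∀ d', rk d' < rk d → (d' ∈ S ↔ d' ∈ T)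

section Aux

variable {adj : D → N → Prop}

lemma mem_nbr {a : N} {T : Finset D} : a ∈ nbr adj T ↔ ∃ d ∈ T, adj d a := by
  simp [nbr]

lemma nbr_mono {A B : Finset D} (h : A ⊆ B) : nbr adj A ⊆ nbr adj B := by
  intro a ha
  rw [mem_nbr] at ha ⊢
  obtain ⟨d, hd, hda⟩ := ha
  exact ⟨d, h hd, hda⟩

lemma nbr_union {A B : Finset D} : nbr adj (A ∪ B) = nbr adj A ∪ nbr adj B := by
  ext a
  simp only [mem_nbr, Finset.mem_union]
  constructor
  · rintro ⟨d, hd | hd, hda⟩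
    · exact Or.inl ⟨d, hd, hda⟩
    · exact Or.inr ⟨d, hd, hda⟩
  · rintro (⟨d, hd, hda⟩ | ⟨d, hd, hda⟩)
    · exact ⟨d, Or.inl hd, hda⟩
    · exact ⟨d, Or.inr hd, hda⟩

lemma nbr_empty : nbr adj (∅ : Finset D) = ∅ := by
  ext a; simp [mem_nbr]

/-- The matched institutions of a matching have the same cardinality as the matching. -/
lemma card_image_fst {M : Finset (D × N)} (hM : isMatching adj Finset.univ M) :
    (M.image Prod.fst).card = M.card := by
  apply Finset.card_image_of_injOn
  intro p hp q hq hpq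
  exact hM.2.1 p hp q hq hpq

/-- Counting lemma: if `T` is saturated by matching `M` and the partner of every
institution in `T` lies in `W`, then `T.card ≤ W.card`. -/
lemma sat_count {M : Finset (D × N)} (hM : isMatching adj Finset.univ M)
    {T : Finset D} (hT : ∀ d ∈ T, ∃ a, (d, a) ∈ M)
    {W : Finset N} (hW : ∀ p ∈ M, p.1 ∈ T → p.2 ∈ W) : T.card ≤ W.card := by
  classical
  set F := M.filter (fun p => p.1 ∈ T) with hF
  have himg : F.image Prod.fst = T := by
    ext d
    simp only [hF, Finset.mem_image, Finset.mem_filter]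
    constructor
    · rintro ⟨p, ⟨_, hp⟩, rfl⟩; exact hp
    · intro hd
      obtain ⟨a, ha⟩ := hT d hd
      exact ⟨(d, a), ⟨ha, hd⟩, rfl⟩
  have h1 : T.card = F.card := by
    rw [← himg]
    exact Finset.card_image_of_injOn fun p hp q hq h =>
      hM.2.1 p (Finset.mem_filter.1 hp).1 q (Finset.mem_filter.1 hq).1 h
  have h2 : F.card = (F.image Prod.snd).card := by
    refine (Finset.card_image_of_injOn fun p hp q hq h =>
      hM.2.2 p (Finset.mem_filter.1 hp).1 q (Finset.mem_filter.1 hq).1 h).symm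
  have h3 : F.image Prod.snd ⊆ W := by
    intro a ha
    obtain ⟨p, hp, rfl⟩ := Finset.mem_image.1 ha
    exact hW p (Finset.mem_filter.1 hp).1 (Finset.mem_filter.1 hp).2
  rw [h1, h2]
  exact Finset.card_le_card h3

/-- Easy direction of Hall: matched sets satisfy Hall's condition. -/
lemma hall_easy {M : Finset (D × N)} (hM : isMatching adj Finset.univ M)
    {T : Finset D} (hT : T ⊆ M.image Prod.fst) : T.card ≤ (nbr adj T).card := by
  apply sat_count hM
  · intro d hd
    obtain ⟨p, hp, rfl⟩ := Finset.mem_image.1 (hT hd)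
    exact ⟨p.2, hp⟩
  · intro p hp hpT
    exact mem_nbr.2 ⟨p.1, hpT, (hM.1 p hp).2⟩

/-- Union of two tight sets within a Hall-satisfying set is tight. -/
lemma tight_union {S A B : Finset D}
    (hallS : ∀ T ⊆ S, T.card ≤ (nbr adj T).card)
    (hA : A ⊆ S) (hB : B ⊆ S)
    (htA : (nbr adj A).card = A.card) (htB : (nbr adj B).card = B.card) :
    (nbr adj (A ∪ B)).card = (A ∪ B).card := by
  have h1 : (A ∪ B).card ≤ (nbr adj (A ∪ B)).card :=
    hallS _ (Finset.union_subset hA hB)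
  have h2 : (A ∩ B).card ≤ (nbr adj (A ∩ B)).card :=
    hallS _ ((Finset.inter_subset_left).trans hA)
  have h3 : nbr adj (A ∩ B) ⊆ nbr adj A ∩ nbr adj B :=
    Finset.subset_inter (nbr_mono Finset.inter_subset_left)
      (nbr_mono Finset.inter_subset_right)
  have h4 : (nbr adj (A ∩ B)).card ≤ (nbr adj A ∩ nbr adj B).card :=
    Finset.card_le_card h3
  have h5 : (nbr adj A ∪ nbr adj B).card + (nbr adj A ∩ nbr adj B).card
      = (nbr adj A).card + (nbr adj B).card := Finset.card_union_add_card_inter _ _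
  have h6 : (A ∪ B).card + (A ∩ B).card = A.card + B.card :=
    Finset.card_union_add_card_inter _ _
  have h7 : (nbr adj (A ∪ B)).card = (nbr adj A ∪ nbr adj B).card := by
    rw [nbr_union]
  omega

/-- Build a single tight set dominating the neighborhoods of everything in `F`. -/
lemma exists_tight_union {S : Finset D}
    (hallS : ∀ T ⊆ S, T.card ≤ (nbr adj T).card) (F : Finset D)
    (h : ∀ d ∈ F, ∃ A, A ⊆ S ∧ (nbr adj A).card = A.card ∧
      ∀ a, adj d a → a ∈ nbr adj A) :
    ∃ A, A ⊆ S ∧ (nbr adj A).card = A.card ∧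
      ∀ d ∈ F, ∀ a, adj d a → a ∈ nbr adj A := by
  classical
  induction F using Finset.induction with
  | empty => exact ⟨∅, Finset.empty_subset _, by simp [nbr_empty], by simp⟩
  | @insert d F hnot ih =>
    obtain ⟨A, hAS, hAt, hAn⟩ := ih fun e he => h e (Finset.mem_insert_of_mem he)
    obtain ⟨B, hBS, hBt, hBn⟩ := h d (Finset.mem_insert_self d F)
    refine ⟨A ∪ B, Finset.union_subset hAS hBS, tight_union hallS hAS hBS hAt hBt, ?_⟩
    intro e he a ha
    rcases Finset.mem_insert.1 he with rfl | he
    · exact nbr_mono Finset.subset_union_right (hBn a ha)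
    · exact nbr_mono Finset.subset_union_left (hAn e he a ha)

/-- Hard direction of Hall: a Hall-satisfying set of institutions is matched by
some matching whose matched set is exactly that set. -/
lemma hall_to_matching {S₀ : Finset D}
    (h : ∀ T ⊆ S₀, T.card ≤ (nbr adj T).card) :
    ∃ M : Finset (D × N), isMatching adj Finset.univ M ∧ M.image Prod.fst = S₀ := by
  classical
  set t : {x // x ∈ S₀} → Finset N := fun x => Finset.univ.filter fun a => adj x.1 a with ht
  have hhall : ∀ s : Finset {x // x ∈ S₀}, s.card ≤ (s.biUnion t).card := by
    intro s
    have h1 : s.biUnion t = nbr adj (s.image Subtype.val) := by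
      ext a
      simp only [Finset.mem_biUnion, mem_nbr, Finset.mem_image, ht, Finset.mem_filter,
        Finset.mem_univ, true_and]
      constructor
      · rintro ⟨x, hx, hax⟩; exact ⟨x.1, ⟨x, hx, rfl⟩, hax⟩
      · rintro ⟨d, ⟨x, hx, rfl⟩, hax⟩; exact ⟨x, hx, hax⟩
    have h2 : s.card = (s.image Subtype.val).card :=
      (Finset.card_image_of_injective s Subtype.val_injective).symm
    have h3 : s.image Subtype.val ⊆ S₀ := by
      intro d hd
      obtain ⟨x, _, rfl⟩ := Finset.mem_image.1 hd
      exact x.2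
    rw [h1, h2]
    exact h _ h3
  obtain ⟨f, hfinj, hf⟩ := (Finset.all_card_le_biUnion_card_iff_existsInjective' t).1 hhall
  refine ⟨S₀.attach.image fun x => (x.1, f x), ⟨?_, ?_, ?_⟩, ?_⟩
  · rintro p hp
    obtain ⟨x, _, rfl⟩ := Finset.mem_image.1 hp
    have := hf x
    simp only [ht, Finset.mem_filter] at this
    exact ⟨Finset.mem_univ _, this.2⟩
  · rintro p hp q hq hpq
    obtain ⟨x, _, rfl⟩ := Finset.mem_image.1 hp
    obtain ⟨y, _, rfl⟩ := Finset.mem_image.1 hq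
    have : x = y := Subtype.ext hpq
    rw [this]
  · rintro p hp q hq hpq
    obtain ⟨x, _, rfl⟩ := Finset.mem_image.1 hp
    obtain ⟨y, _, rfl⟩ := Finset.mem_image.1 hq
    have : x = y := hfinj hpq
    rw [this]
  · ext d
    constructor
    · intro hd
      obtain ⟨p, hp, rfl⟩ := Finset.mem_image.1 hd
      obtain ⟨x, _, rfl⟩ := Finset.mem_image.1 hp
      exact x.2
    · intro hd
      exact Finset.mem_image.2 ⟨(d, f ⟨d, hd⟩),
        Finset.mem_image.2 ⟨⟨d, hd⟩, Finset.mem_attach _ _, rfl⟩, rfl⟩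

/-- sigCount in terms of the matched institution set. -/
lemma sigCount_eq {rk : D → ℕ} {M : Finset (D × N)}
    (hM : isMatching adj Finset.univ M) (r : ℕ) :
    sigCount rk M r = ((M.image Prod.fst).filter fun d => rk d = r).card := by
  classical
  rw [sigCount]
  have h : (M.filter fun p => rk p.1 = r).image Prod.fst
      = (M.image Prod.fst).filter fun d => rk d = r := by
    ext d
    simp only [Finset.mem_image, Finset.mem_filter]
    constructor
    · rintro ⟨p, ⟨hp, hr⟩, rfl⟩; exact ⟨⟨p, hp, rfl⟩, hr⟩
    · rintro ⟨⟨p, hp, rfl⟩, hr⟩; exact ⟨p, ⟨hp, hr⟩, rfl⟩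
  rw [← h]
  exact (Finset.card_image_of_injOn fun p hp q hq hpq =>
    hM.2.1 p (Finset.mem_filter.1 hp).1 q (Finset.mem_filter.1 hq).1 hpq).symm

/-- If the matched set of `M''` strictly contains that of `M`, then `M''` is
signature-better. -/
lemma sigBetter_of_ssubset {rk : D → ℕ} (hrk : Function.Injective rk)
    {M M'' : Finset (D × N)} (hM : isMatching adj Finset.univ M)
    (hM'' : isMatching adj Finset.univ M'')
    (hsub : M.image Prod.fst ⊆ M''.image Prod.fst)
    {d : D} (hd : d ∈ M''.image Prod.fst) (hdn : d ∉ M.image Prod.fst) :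
    sigBetter rk M'' M := by
  classical
  have hle : ∀ s, sigCount rk M s ≤ sigCount rk M'' s := by
    intro s
    rw [sigCount_eq hM, sigCount_eq hM'']
    exact Finset.card_le_card (Finset.filter_subset_filter _ hsub)
  have hne : sigCount rk M (rk d) ≠ sigCount rk M'' (rk d) := by
    rw [sigCount_eq hM, sigCount_eq hM'']
    have h1 : (M.image Prod.fst).filter (fun e => rk e = rk d) = ∅ := by
      rw [Finset.filter_eq_empty_iff]
      intro e he hre
      exact hdn (hrk hre ▸ he)
    have h2 : d ∈ (M''.image Prod.fst).filter fun e => rk e = rk d :=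
      Finset.mem_filter.2 ⟨hd, rfl⟩
    rw [h1]
    simp only [Finset.card_empty]
    exact fun h => by
      have := Finset.card_pos.2 ⟨d, h2⟩
      omega
  have hex : ∃ r, sigCount rk M r ≠ sigCount rk M'' r := ⟨rk d, hne⟩
  refine ⟨Nat.find hex, fun s hs => ?_, ?_⟩
  · by_contra h
    exact Nat.find_min hex hs fun h' => h h'.symm
  · exact lt_of_le_of_ne (hle _) (Nat.find_spec hex)

end Aux

/-- When all edges of an institution share one rank and distinct institutions have
distinct ranks, every rank-maximal matching is a maximum-cardinality matching. -/
theorem rank_maximal_is_maximum (adj : D → N → Prop) (rk : D → ℕ)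
    (hrk : Function.Injective rk) (M : Finset (D × N)) (hM : rankMaximal adj rk M) :
    ∀ M' : Finset (D × N), isMatching adj Finset.univ M' → M'.card ≤ M.card := by
  classical
  intro M' hM'
  by_contra hlt
  push_neg at hlt
  set S := M.image Prod.fst with hS
  set S' := M'.image Prod.fst with hS'
  have hcardS : S.card = M.card := card_image_fst hM.1
  have hcardS' : S'.card = M'.card := card_image_fst hM'
  have hallS : ∀ T ⊆ S, T.card ≤ (nbr adj T).card := fun T hT => hall_easy hM.1 hT
  by_cases hext : ∃ d ∉ S, ∀ T ⊆ insert d S, T.card ≤ (nbr adj T).card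
  · obtain ⟨d, hdS, hhall⟩ := hext
    obtain ⟨M'', hM'', himg⟩ := hall_to_matching hhall
    refine hM.2 M'' hM'' (sigBetter_of_ssubset hrk hM.1 hM'' ?_ ?_ hdS)
    · rw [himg]; exact Finset.subset_insert _ _
    · rw [himg]; exact Finset.mem_insert_self _ _
  · push_neg at hext
    -- For each d ∉ S, extract a tight set A_d ⊆ S absorbing d's neighborhood.
    have hAd : ∀ d ∈ Finset.univ \ S, ∃ A, A ⊆ S ∧ (nbr adj A).card = A.card ∧
        ∀ a, adj d a → a ∈ nbr adj A := by
      intro d hd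
      have hdS : d ∉ S := (Finset.mem_sdiff.1 hd).2
      obtain ⟨T, hTsub, hTcard⟩ := hext d hdS
      have hdT : d ∈ T := by
        by_contra hdT
        have : T ⊆ S := fun e he => by
          rcases Finset.mem_insert.1 (hTsub he) with rfl | h
          · exact absurd he hdT
          · exact h
        exact absurd (hallS T this) (by omega)
      set A := T.erase d with hA
      have hAS : A ⊆ S := by
        intro e he
        have h1 := Finset.mem_erase.1 he
        rcases Finset.mem_insert.1 (hTsub h1.2) with rfl | h
        · exact absurd rfl h1.1
        · exact h
      have hTA : T = insert d A := by rw [hA, Finset.insert_erase hdT]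
      have hcardT : T.card = A.card + 1 := by
        rw [hTA, Finset.card_insert_of_notMem (Finset.notMem_erase _ _)]
      have hsub : nbr adj A ⊆ nbr adj T := nbr_mono (hTA ▸ Finset.subset_insert _ _)
      have h1 : A.card ≤ (nbr adj A).card := hallS A hAS
      have h2 : (nbr adj A).card ≤ (nbr adj T).card := Finset.card_le_card hsub
      have htight : (nbr adj A).card = A.card := by omega
      have heq : nbr adj A = nbr adj T :=
        Finset.eq_of_subset_of_card_le hsub (by omega)
      refine ⟨A, hAS, htight, fun a ha => ?_⟩
      rw [heq]
      exact mem_nbr.2 ⟨d, hdT, ha⟩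
    obtain ⟨A, hAS, hAt, hAn⟩ := exists_tight_union hallS (Finset.univ \ S) hAd
    -- Counting: use matching M' on T := (S' \ S) ∪ (A ∩ S'), all of whose partners
    -- lie in nbr adj A.
    have hcount : ((S' \ S) ∪ (A ∩ S')).card ≤ (nbr adj A).card := by
      apply sat_count hM'
      · intro d hd
        have hd' : d ∈ S' := by
          rcases Finset.mem_union.1 hd with h | h
          · exact (Finset.mem_sdiff.1 h).1
          · exact (Finset.mem_inter.1 h).2
        obtain ⟨p, hp, rfl⟩ := Finset.mem_image.1 hd'
        exact ⟨p.2, hp⟩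
      · intro p hp hpT
        rcases Finset.mem_union.1 hpT with h | h
        · have hpS : p.1 ∉ S := (Finset.mem_sdiff.1 h).2
          exact hAn p.1 (Finset.mem_sdiff.2 ⟨Finset.mem_univ _, hpS⟩) p.2 (hM'.1 p hp).2
        · exact mem_nbr.2 ⟨p.1, (Finset.mem_inter.1 h).1, (hM'.1 p hp).2⟩
    have hdisj : Disjoint (S' \ S) (A ∩ S') := by
      apply Finset.disjoint_left.2
      intro d hd hd2
      exact (Finset.mem_sdiff.1 hd).2 (hAS (Finset.mem_inter.1 hd2).1)
    have hcardU : ((S' \ S) ∪ (A ∩ S')).card = (S' \ S).card + (A ∩ S').card :=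
      Finset.card_union_of_disjoint hdisj
    have hAsplit : (A ∩ S').card + (A \ S').card = A.card :=
      Finset.card_inter_add_card_sdiff _ _
    have hAsub : A \ S' ⊆ S \ S' := fun e he =>
      Finset.mem_sdiff.2 ⟨hAS (Finset.mem_sdiff.1 he).1, (Finset.mem_sdiff.1 he).2⟩
    have h8 : (A \ S').card ≤ (S \ S').card := Finset.card_le_card hAsub
    have h9 : (S' ∩ S).card + (S' \ S).card = S'.card :=
      Finset.card_inter_add_card_sdiff _ _
    have h10 : (S ∩ S').card + (S \ S').card = S.card :=
      Finset.card_inter_add_card_sdiff _ _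
    have h11 : (S' ∩ S).card = (S ∩ S').card := by rw [Finset.inter_comm]
    omega
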